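/- Let φ be an elliptic automorphism of D (φ ≠ id with a fixed point in D) and let ψ be any automorphism of D. If (b_n) is a sequence in D with ψ(φ^[n](b_n)) = 0 for all n ≥ 0, then (b_n) is not a Blaschke sequence; that is, ∑_{n=0}^∞ (1 − |b_n|) = ∞. -/

import Mathlib

/-! Disc automorphisms preserve the pseudo-hyperbolic distance `ρ(z, w) = |z - w| / |1 - w̄ z|`.
If `p ∈ D` is fixed by `φ`, then `ρ(b n, p) = ρ(ψ (φ^[n] (b n)), ψ (φ^[n] p)) = ρ(0, ψ p)` for
every `n`, so all `b n` lie on one pseudo-hyperbolic circle about `p`. That circle is a compact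
subset of `D`, so `1 - |b n|` is bounded away from `0`. -/

/-- A (holomorphic) automorphism of the open unit disc `D = {z : |z| < 1}`:
a map of the form `z ↦ λ(z − a)/(1 − conj(a)·z)` with `a ∈ D` and `|λ| = 1`. -/
def IsDiscAut (φ : ℂ → ℂ) : Prop :=
  ∃ a lam : ℂ, ‖a‖ < 1 ∧ ‖lam‖ = 1 ∧
    ∀ z : ℂ, φ z = lam * (z - a) / (1 - (starRingEnd ℂ) a * z)

/-- An elliptic automorphism: `φ ≠ id` with a fixed point in the open disc. -/
def IsEllipticAut (φ : ℂ → ℂ) : Prop :=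
  IsDiscAut φ ∧ φ ≠ id ∧ ∃ a : ℂ, ‖a‖ < 1 ∧ φ a = a

/-- A parabolic automorphism: `φ ≠ id` with exactly one fixed point in the closed disc,
lying on the unit circle. -/
def IsParabolicAut (φ : ℂ → ℂ) : Prop :=
  IsDiscAut φ ∧ φ ≠ id ∧ ∃ w : ℂ, ‖w‖ = 1 ∧
    {z : ℂ | ‖z‖ ≤ 1 ∧ φ z = z} = {w}

/-- A hyperbolic automorphism: `φ ≠ id` with exactly two fixed points in the closed disc,
both on the unit circle. -/
def IsHyperbolicAut (φ : ℂ → ℂ) : Prop :=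
  IsDiscAut φ ∧ φ ≠ id ∧ ∃ w₁ w₂ : ℂ, w₁ ≠ w₂ ∧
    ‖w₁‖ = 1 ∧ ‖w₂‖ = 1 ∧
    {z : ℂ | ‖z‖ ≤ 1 ∧ φ z = z} = {w₁, w₂}

/-- The parabolic automorphism `φ_c(z) = (1 + c − 2z)/(2c − (1 + c)z)` fixing `1`. -/
noncomputable def phiC (c : ℂ) : ℂ → ℂ := fun z => (1 + c - 2 * z) / (2 * c - (1 + c) * z)

/-- The hyperbolic automorphism `ψ_r(z) = (z − r)/(1 − r z)` fixing `−1` and `1`. -/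
noncomputable def psiR (r : ℝ) : ℂ → ℂ := fun z => (z - (r : ℂ)) / (1 - (r : ℂ) * z)

open ComplexConjugate

lemma sq_norm_one_sub_conj_mul_sub_sq_norm_sub (z w : ℂ) :
    ‖1 - conj w * z‖ ^ 2 - ‖z - w‖ ^ 2 = (1 - ‖z‖ ^ 2) * (1 - ‖w‖ ^ 2) := by
  simp only [Complex.sq_norm, Complex.normSq_apply, Complex.sub_re, Complex.sub_im,
    Complex.mul_re, Complex.mul_im, Complex.conj_re, Complex.conj_im, Complex.one_re,
    Complex.one_im]
  ring

lemma one_sub_conj_mul_ne_zero {z w : ℂ} (hz : ‖z‖ ≤ 1) (hw : ‖w‖ < 1) :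
    1 - conj w * z ≠ 0 := by
  have : ‖conj w * z‖ < 1 := by
    rw [norm_mul, Complex.norm_conj]
    nlinarith [norm_nonneg w, norm_nonneg z]
  intro h
  rw [← sub_eq_zero.mp h, norm_one] at this
  exact this.false

noncomputable def pseudoHypDist (z w : ℂ) : ℝ := ‖z - w‖ / ‖1 - conj w * z‖

lemma pseudoHypDist_nonneg (z w : ℂ) : 0 ≤ pseudoHypDist z w := by
  unfold pseudoHypDist; positivity

lemma one_sub_pseudoHypDist_sq {z w : ℂ} (hz : ‖z‖ < 1) (hw : ‖w‖ < 1) :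
    1 - pseudoHypDist z w ^ 2 = (1 - ‖z‖ ^ 2) * (1 - ‖w‖ ^ 2) / ‖1 - conj w * z‖ ^ 2 := by
  have hE : ‖1 - conj w * z‖ ≠ 0 := norm_ne_zero_iff.mpr (one_sub_conj_mul_ne_zero hz.le hw)
  rw [pseudoHypDist, div_pow, one_sub_div (pow_ne_zero 2 hE),
    sq_norm_one_sub_conj_mul_sub_sq_norm_sub]

lemma pseudoHypDist_lt_one {z w : ℂ} (hz : ‖z‖ < 1) (hw : ‖w‖ < 1) :
    pseudoHypDist z w < 1 := by
  have hpos : 0 < 1 - pseudoHypDist z w ^ 2 := by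
    rw [one_sub_pseudoHypDist_sq hz hw]
    have := one_sub_conj_mul_ne_zero hz.le hw
    have : ‖z‖ ^ 2 < 1 := by nlinarith [norm_nonneg z]
    have : ‖w‖ ^ 2 < 1 := by nlinarith [norm_nonneg w]
    positivity
  nlinarith [pseudoHypDist_nonneg z w]

lemma le_one_sub_norm_of_pseudoHypDist_le {p z : ℂ} {r : ℝ} (hp : ‖p‖ < 1) (hz : ‖z‖ < 1)
    (hr : pseudoHypDist z p ≤ r) :
    (1 - r ^ 2) * (1 - ‖p‖) / (2 * (1 + ‖p‖)) ≤ 1 - ‖z‖ := by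
  set E := ‖1 - conj p * z‖
  have hE : 1 - ‖p‖ ≤ E :=
    calc 1 - ‖p‖ ≤ 1 - ‖conj p * z‖ := by
          rw [norm_mul, Complex.norm_conj]; nlinarith [norm_nonneg p, norm_nonneg z]
      _ ≤ E := by simpa using norm_sub_norm_le 1 (conj p * z)
  have hρ := pseudoHypDist_nonneg z p
  have hρ1 := pseudoHypDist_lt_one hz hp
  have hp1 : 0 < 1 - ‖p‖ := by linarith
  have hmain : (1 - r ^ 2) * (1 - ‖p‖) ^ 2 ≤ (1 - ‖z‖ ^ 2) * (1 - ‖p‖ ^ 2) :=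
    calc (1 - r ^ 2) * (1 - ‖p‖) ^ 2 ≤ (1 - pseudoHypDist z p ^ 2) * E ^ 2 := by
          gcongr
          nlinarith
      _ = (1 - ‖z‖ ^ 2) * (1 - ‖p‖ ^ 2) := by
          rw [one_sub_pseudoHypDist_sq hz hp, div_mul_cancel₀ _ (pow_ne_zero 2
            (norm_ne_zero_iff.mpr (one_sub_conj_mul_ne_zero hz.le hp)))]
  have hz1 : 0 ≤ (1 - ‖z‖) * ((1 - ‖p‖) * (1 + ‖p‖)) := by
    have := norm_nonneg p; have := norm_nonneg z
    have : 0 ≤ 1 - ‖z‖ := by linarith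
    positivity
  rw [div_le_iff₀ (by positivity)]
  refine le_of_mul_le_mul_left ?_ hp1
  calc (1 - ‖p‖) * ((1 - r ^ 2) * (1 - ‖p‖)) = (1 - r ^ 2) * (1 - ‖p‖) ^ 2 := by ring
    _ ≤ (1 + ‖z‖) * ((1 - ‖z‖) * ((1 - ‖p‖) * (1 + ‖p‖))) := by linear_combination hmain
    _ ≤ 2 * ((1 - ‖z‖) * ((1 - ‖p‖) * (1 + ‖p‖))) := by gcongr; linarith
    _ = (1 - ‖p‖) * ((1 - ‖z‖) * (2 * (1 + ‖p‖))) := by ring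

lemma not_summable_one_sub_norm_of_pseudoHypDist_le {p : ℂ} {r : ℝ} (hp : ‖p‖ < 1)
    (hr : r < 1) {b : ℕ → ℂ} (hb : ∀ n, ‖b n‖ < 1) (hbr : ∀ n, pseudoHypDist (b n) p ≤ r) :
    ¬ Summable (fun n => 1 - ‖b n‖) := by
  intro hs
  have hr0 : 0 ≤ r := (pseudoHypDist_nonneg _ _).trans (hbr 0)
  have hε : 0 < (1 - r ^ 2) * (1 - ‖p‖) / (2 * (1 + ‖p‖)) := by
    have : r ^ 2 < 1 := by nlinarith
    have : 0 < 1 - ‖p‖ := by linarith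
    positivity
  obtain ⟨n, hn⟩ := (hs.tendsto_atTop_zero.eventually (gt_mem_nhds hε)).exists
  exact (le_one_sub_norm_of_pseudoHypDist_le hp (hb n) (hbr n)).not_gt hn

namespace IsDiscAut

variable {φ : ℂ → ℂ}

lemma norm_apply (hφ : IsDiscAut φ) : ∃ a : ℂ, ‖a‖ < 1 ∧ ∀ z, ‖φ z‖ = pseudoHypDist z a := by
  obtain ⟨a, lam, ha, hlam, hφ⟩ := hφ
  exact ⟨a, ha, fun z => by rw [hφ, norm_div, norm_mul, hlam, one_mul, pseudoHypDist]⟩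

lemma norm_apply_lt_one (hφ : IsDiscAut φ) {z : ℂ} (hz : ‖z‖ < 1) : ‖φ z‖ < 1 := by
  obtain ⟨a, ha, hnorm⟩ := hφ.norm_apply
  exact hnorm z ▸ pseudoHypDist_lt_one hz ha

lemma iterate_norm_lt_one (hφ : IsDiscAut φ) (n : ℕ) {z : ℂ} (hz : ‖z‖ < 1) :
    ‖φ^[n] z‖ < 1 :=
  Set.MapsTo.iterate (s := {z : ℂ | ‖z‖ < 1}) (fun _ => hφ.norm_apply_lt_one) n hz

lemma pseudoHypDist_apply (hφ : IsDiscAut φ) {z w : ℂ} (hz : ‖z‖ < 1) (hw : ‖w‖ < 1) :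
    pseudoHypDist (φ z) (φ w) = pseudoHypDist z w := by
  obtain ⟨a, lam, ha, hlam, hφ⟩ := hφ
  have hdz := one_sub_conj_mul_ne_zero hz.le ha
  have hdw := one_sub_conj_mul_ne_zero hw.le ha
  have hdw' : conj (1 - conj a * w) ≠ 0 := (map_ne_zero _).mpr hdw
  have hda : 1 - conj a * a ≠ 0 := one_sub_conj_mul_ne_zero ha.le ha
  have hlam' : conj lam * lam = 1 := by rw [Complex.conj_mul', hlam]; norm_num
  have hsub : φ z - φ w =
      lam * (1 - conj a * a) * (z - w) / ((1 - conj a * z) * (1 - conj a * w)) := by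
    rw [hφ, hφ, div_sub_div _ _ hdz hdw]
    ring
  have hone : 1 - conj (φ w) * φ z =
      (1 - conj a * a) * (1 - conj w * z) / (conj (1 - conj a * w) * (1 - conj a * z)) := by
    rw [hφ, hφ, map_div₀, div_mul_div_comm, one_sub_div (mul_ne_zero hdw' hdz)]
    congr 1
    simp only [map_mul, map_sub, map_one, Complex.conj_conj]
    linear_combination (conj a - conj w) * (z - a) * hlam'
  rw [pseudoHypDist, pseudoHypDist, hsub, hone]
  simp only [norm_div, norm_mul, Complex.norm_conj, hlam, one_mul]
  have := norm_ne_zero_iff.mpr hdz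
  have := norm_ne_zero_iff.mpr hdw
  have := norm_ne_zero_iff.mpr hda
  field_simp

lemma pseudoHypDist_iterate (hφ : IsDiscAut φ) (n : ℕ) {z w : ℂ} (hz : ‖z‖ < 1)
    (hw : ‖w‖ < 1) : pseudoHypDist (φ^[n] z) (φ^[n] w) = pseudoHypDist z w := by
  induction n generalizing z w with
  | zero => rfl
  | succ n ih =>
    rw [Function.iterate_succ_apply, Function.iterate_succ_apply,
      ih (hφ.norm_apply_lt_one hz) (hφ.norm_apply_lt_one hw), hφ.pseudoHypDist_apply hz hw]

end IsDiscAut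

/-- If `φ` is elliptic, `ψ` is any disc automorphism, and `(b_n)` in `D`
satisfies `ψ(φ^[n](b_n)) = 0` for all `n`, then `(b_n)` is not a Blaschke sequence. -/
theorem stmt_4 (φ ψ : ℂ → ℂ) (hφ : IsEllipticAut φ) (hψ : IsDiscAut ψ)
    (b : ℕ → ℂ) (hb : ∀ n : ℕ, ‖b n‖ < 1)
    (hzero : ∀ n : ℕ, ψ (φ^[n] (b n)) = 0) :
    ¬ Summable (fun n : ℕ => 1 - ‖b n‖) := by
  obtain ⟨hφ, -, p, hp, hfix⟩ := hφ
  have hψp : ‖ψ p‖ < 1 := hψ.norm_apply_lt_one hp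
  refine not_summable_one_sub_norm_of_pseudoHypDist_le hp
    (pseudoHypDist_lt_one (by simp : ‖(0 : ℂ)‖ < 1) hψp) hb fun n => le_of_eq ?_
  calc pseudoHypDist (b n) p
      = pseudoHypDist (ψ (φ^[n] (b n))) (ψ (φ^[n] p)) := by
        rw [hψ.pseudoHypDist_apply (hφ.iterate_norm_lt_one n (hb n))
          (hφ.iterate_norm_lt_one n hp), hφ.pseudoHypDist_iterate n (hb n) hp]
    _ = pseudoHypDist 0 (ψ p) := by rw [hzero n, Function.iterate_fixed hfix]
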